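/- arXiv:1507.02753 — 5 statements merged into one kernel-verified Lean document; each statement's English description precedes it below -/
import Mathlib

section
/- Let n ≥ 2. There exists a real constant C > 0, depending only on n, such that for every real B ≥ 1 and every prime p with p > C·B², there is no polynomial f ∈ ℤ[x] of degree n with all coefficients in [−B, B) such that f(x+i) is p-Eisenstein for some integer i. -/
open Polynomial

private lemma choose_le_two_pow' (n k : ℕ) : n.choose k ≤ 2 ^ n := by
  rcases le_or_gt k n with h | h
  · calc n.choose k ≤ ∑ i ∈ Finset.range (n+1), n.choose i :=
        Finset.single_le_sum (f := fun i => n.choose i) (fun _ _ => Nat.zero_le _)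
          (Finset.mem_range.mpr (by omega))
      _ = 2 ^ n := Nat.sum_range_choose n
  · simp [Nat.choose_eq_zero_of_lt h]


/-- A polynomial over `ℤ` is `p`-Eisenstein of degree `n`. -/
def IsEisensteinZ (p n : ℕ) (f : Polynomial ℤ) : Prop :=
  f.natDegree = n ∧ ¬ (p : ℤ) ∣ f.coeff n ∧ (∀ i < n, (p : ℤ) ∣ f.coeff i) ∧
    ¬ (p : ℤ) ^ 2 ∣ f.coeff 0

/-- For `n ≥ 2` there is a constant `c > 0`, depending only on `n`, such that
for every real `B ≥ 1` and every prime `p > c·B²`, no polynomial of degree `n`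
over `ℤ` with all coefficients in `[-B, B)` becomes `p`-Eisenstein after an
integer shift. -/
theorem no_shifted_eisenstein_for_large_primes (n : ℕ) (hn : 2 ≤ n) :
    ∃ c : ℝ, 0 < c ∧ ∀ B : ℝ, 1 ≤ B → ∀ p : ℕ, p.Prime → c * B ^ 2 < p →
      ¬ ∃ f : Polynomial ℤ, f.natDegree = n ∧
        (∀ j, -B ≤ (f.coeff j : ℝ) ∧ (f.coeff j : ℝ) < B) ∧
        ∃ i : ℤ, IsEisensteinZ p n (f.comp (X + C i)) := by
  refine ⟨((n+1) * 2^n + n + 1 : ℕ), by positivity, ?_⟩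
  intro B hB p hp hpc ⟨f, hdeg, hcoeff, i, hgdeg, hgn, hgd, hg0⟩
  set g := f.comp (X + C i) with hg_def
  have hB0 : (0:ℝ) < B := lt_of_lt_of_le one_pos hB
  have hB2 : (1:ℝ) ≤ B ^ 2 := by nlinarith
  have hcp : (((n+1) * 2^n + n + 1 : ℕ) : ℝ) ≤ ((n+1) * 2^n + n + 1 : ℕ) * B ^ 2 :=
    le_mul_of_one_le_right (by positivity) hB2
  have hnp : (n : ℝ) < p := by
    refine lt_of_le_of_lt ?_ (lt_of_le_of_lt hcp hpc)
    push_cast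
    nlinarith [pow_pos (show (0:ℝ) < 2 by norm_num) n]
  have hnltp : n < p := by exact_mod_cast hnp
  have habs : ∀ j, |(f.coeff j : ℝ)| ≤ B := fun j =>
    abs_le.mpr ⟨(hcoeff j).1, le_of_lt (hcoeff j).2⟩
  haveI : Fact p.Prime := ⟨hp⟩
  set φ := Int.castRingHom (ZMod p) with hφ
  set A : ZMod p := ((g.coeff n : ZMod p)) with hA
  have hmapg : g.map φ = C A * X ^ n := by
    ext k
    rcases lt_trichotomy k n with hk | hk | hk
    · rw [coeff_map]
      have h0 : φ (g.coeff k) = 0 := (ZMod.intCast_zmod_eq_zero_iff_dvd _ p).mpr (hgd k hk)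
      rw [h0, coeff_C_mul, coeff_X_pow, if_neg (by omega : ¬ k = n), mul_zero]
    · subst hk
      simp [coeff_map, hA]
    · rw [coeff_map, coeff_eq_zero_of_natDegree_lt (by omega : g.natDegree < k), map_zero,
        coeff_C_mul, coeff_X_pow, if_neg (by omega : ¬ k = n), mul_zero]
  have hf_eq : f = g.comp (X - C i) := by
    rw [hg_def, comp_assoc]; simp
  have hcm : ∀ k, (f.coeff k : ZMod p)
      = A * (-(i : ZMod p)) ^ (n - k) * (n.choose k : ZMod p) := by
    intro k
    have h1 : f.map φ = C A * (X + C (-(i : ZMod p))) ^ n := by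
      rw [hf_eq, map_comp, hmapg]
      simp [sub_eq_add_neg]
    have h2 : (f.map φ).coeff k = (C A * (X + C (-(i : ZMod p))) ^ n).coeff k := by rw [h1]
    rw [coeff_map, coeff_C_mul, coeff_X_add_C_pow] at h2
    rw [show ((f.coeff k : ZMod p)) = φ (f.coeff k) from rfl, h2, mul_assoc]
  have han : (f.coeff n : ZMod p) = A := by simpa using hcm n
  have hpan : ¬ (p : ℤ) ∣ f.coeff n := by
    intro h
    apply hgn
    rw [← ZMod.intCast_zmod_eq_zero_iff_dvd, ← hA, ← han,
      ZMod.intCast_zmod_eq_zero_iff_dvd]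
    exact h
  -- key quadratic relations between consecutive coefficients
  have hG : ∀ k < n, (n : ℤ) * (n.choose k) * f.coeff n * f.coeff (n - k - 1)
      = (n.choose (k+1)) * f.coeff (n-1) * f.coeff (n-k) := by
    intro k hk
    set G : ℤ := (n : ℤ) * (n.choose k) * f.coeff n * f.coeff (n - k - 1)
      - (n.choose (k+1)) * f.coeff (n-1) * f.coeff (n-k) with hGdef
    have hGp : (p : ℤ) ∣ G := by
      rw [← ZMod.intCast_zmod_eq_zero_iff_dvd]
      have c1 : n.choose (n - k - 1) = n.choose (k+1) := by
        rw [show n - k - 1 = n - (k+1) by omega, Nat.choose_symm (by omega)]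
      have c2 : n.choose (n - k) = n.choose k := Nat.choose_symm (by omega)
      have c3 : n.choose (n - 1) = n := by
        rw [Nat.choose_symm (by omega : 1 ≤ n), Nat.choose_one_right]
      push_cast [hGdef]
      rw [hcm (n - k - 1), hcm (n - 1), hcm (n - k), han,
        show n - (n - k - 1) = k + 1 by omega, show n - (n - k) = k by omega,
        show n - (n - 1) = 1 by omega, c1, c2, c3]
      push_cast
      ring
    have hGsmall : |G| < (p : ℤ) := by
      have h2n : ∀ m, |((n.choose m : ℤ) : ℝ)| ≤ (2:ℝ)^n := by
        intro m
        rw [abs_of_nonneg (by positivity)]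
        exact_mod_cast choose_le_two_pow' n m
      have hb1 : |(((n : ℤ) * (n.choose k) * f.coeff n * f.coeff (n - k - 1) : ℤ) : ℝ)| ≤
          (n : ℝ) * 2 ^ n * B ^ 2 := by
        push_cast
        rw [abs_mul, abs_mul, abs_mul]
        have hn0 : |((n:ℕ):ℝ)| = (n:ℝ) := abs_of_nonneg (by positivity)
        calc |((n:ℕ):ℝ)| * |((n.choose k : ℤ):ℝ)| * |(f.coeff n : ℝ)| * |(f.coeff (n-k-1) : ℝ)|
            ≤ (n:ℝ) * 2^n * B * B := by
              rw [hn0]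
              gcongr <;> first | exact h2n _ | exact habs _ | positivity
          _ = (n:ℝ) * 2^n * B^2 := by ring
      have hb2 : |(((n.choose (k+1) : ℤ) * f.coeff (n-1) * f.coeff (n-k) : ℤ) : ℝ)| ≤
          (2:ℝ)^n * B ^ 2 := by
        push_cast
        rw [abs_mul, abs_mul]
        calc |((n.choose (k+1) : ℤ):ℝ)| * |(f.coeff (n-1) : ℝ)| * |(f.coeff (n-k) : ℝ)|
            ≤ (2:ℝ)^n * B * B := by
              gcongr <;> first | exact h2n _ | exact habs _ | positivity
          _ = (2:ℝ)^n * B^2 := by ring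
      have hG' : (|G| : ℝ) < (p : ℝ) := by
        have htri : (|G| : ℝ) ≤ (n:ℝ) * 2^n * B^2 + (2:ℝ)^n * B^2 := by
          rw [hGdef]
          push_cast [Int.cast_abs] at hb1 hb2 ⊢
          exact le_trans (abs_sub _ _) (add_le_add hb1 hb2)
        refine lt_of_le_of_lt htri (lt_of_le_of_lt ?_ hpc)
        push_cast
        nlinarith [pow_pos hB0 2, pow_pos (show (0:ℝ) < 2 by norm_num) n]
      exact_mod_cast hG'
    have hG0 := Int.eq_zero_of_abs_lt_dvd hGp hGsmall
    rw [hGdef] at hG0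
    linarith
  -- inductive determination of lower coefficients
  have hH : ∀ k, k ≤ n → ((n : ℤ) * f.coeff n) ^ k * f.coeff (n - k)
      = (n.choose k) * f.coeff n * f.coeff (n-1) ^ k := by
    intro k
    induction k with
    | zero => simp
    | succ k ih =>
      intro hk1
      have ihk := ih (by omega)
      have hGk := hG k (by omega)
      have hch : ((n.choose k : ℤ)) ≠ 0 := by
        have := Nat.choose_pos (show k ≤ n by omega)
        exact_mod_cast this.ne'
      apply mul_left_cancel₀ hch
      rw [show n - (k+1) = n - k - 1 by omega]
      calc (n.choose k : ℤ) * (((n:ℤ) * f.coeff n) ^ (k+1) * f.coeff (n - k - 1))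
          = ((n:ℤ) * f.coeff n) ^ k *
              ((n:ℤ) * (n.choose k) * f.coeff n * f.coeff (n-k-1)) := by ring
        _ = ((n:ℤ) * f.coeff n) ^ k *
              ((n.choose (k+1)) * f.coeff (n-1) * f.coeff (n-k)) := by rw [hGk]
        _ = (n.choose (k+1)) * f.coeff (n-1) *
              (((n:ℤ) * f.coeff n) ^ k * f.coeff (n-k)) := by ring
        _ = (n.choose (k+1)) * f.coeff (n-1) *
              ((n.choose k) * f.coeff n * f.coeff (n-1)^k) := by rw [ihk]
        _ = (n.choose k : ℤ) * ((n.choose (k+1)) * f.coeff n * f.coeff (n-1) ^ (k+1)) := by ring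
  -- p divides the linear form w
  set w : ℤ := f.coeff (n-1) + (n : ℤ) * f.coeff n * i with hw
  have hpw : (p:ℤ) ∣ w := by
    rw [hw, ← ZMod.intCast_zmod_eq_zero_iff_dvd]
    push_cast
    rw [hcm (n-1), han, show n - (n-1) = 1 by omega,
      show n.choose (n-1) = n by rw [Nat.choose_symm (by omega : 1 ≤ n), Nat.choose_one_right]]
    push_cast
    ring
  -- evaluation identity
  have heval : ((n : ℤ) * f.coeff n) ^ n * f.eval i = f.coeff n * w ^ n := by
    rw [eval_eq_sum_range' (show f.natDegree < n + 1 by omega) i, Finset.mul_sum]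
    have hw_pow : w ^ n = ∑ j ∈ Finset.range (n+1),
        ((n:ℤ) * f.coeff n * i) ^ j * f.coeff (n-1) ^ (n - j) * (n.choose j) := by
      rw [hw, add_comm, add_pow]
    rw [hw_pow, Finset.mul_sum]
    refine Finset.sum_congr rfl ?_
    intro j hj
    have hjn : j ≤ n := by
      have := Finset.mem_range.mp hj; omega
    have hHj := hH (n - j) (by omega)
    rw [show n - (n - j) = j by omega, Nat.choose_symm hjn] at hHj
    have epow : ((n:ℤ) * f.coeff n) ^ n
        = ((n:ℤ) * f.coeff n) ^ (n - j) * ((n:ℤ) * f.coeff n) ^ j := by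
      rw [← pow_add]; congr 1; omega
    calc ((n:ℤ)*f.coeff n)^n * (f.coeff j * i ^ j)
        = (((n:ℤ)*f.coeff n)^(n-j) * f.coeff j) * (((n:ℤ)*f.coeff n)^j * i^j) := by
          rw [epow]; ring
      _ = ((n.choose j : ℤ) * f.coeff n * f.coeff (n-1)^(n-j)) *
            (((n:ℤ)*f.coeff n)^j * i^j) := by rw [hHj]
      _ = f.coeff n * (((n:ℤ)*f.coeff n*i)^j * f.coeff (n-1)^(n-j) * (n.choose j)) := by ring
  -- conclude
  have hg0' : g.coeff 0 = f.eval i := by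
    rw [hg_def, coeff_zero_eq_eval_zero, eval_comp]
    simp
  have hprime : Prime ((p:ℤ)) := Nat.prime_iff_prime_int.mp hp
  have hpN : ¬ (p:ℤ) ∣ (n:ℤ) * f.coeff n := by
    intro h
    rcases hprime.dvd_mul.mp h with h | h
    · have h' : p ∣ n := by exact_mod_cast h
      exact absurd (Nat.le_of_dvd (by omega) h') (by omega)
    · exact hpan h
  have hcop : IsCoprime ((p:ℤ)) ((n:ℤ) * f.coeff n) :=
    (hprime.irreducible.coprime_iff_not_dvd).mpr hpN
  have hcop2 : IsCoprime ((p:ℤ)^2) (((n:ℤ) * f.coeff n)^n) := hcop.pow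
  have hdvd : (p:ℤ)^2 ∣ ((n:ℤ)*f.coeff n)^n * f.eval i := by
    rw [heval]
    exact Dvd.dvd.mul_left
      (dvd_trans (pow_dvd_pow_of_dvd hpw 2) (pow_dvd_pow w (by omega))) _
  exact hg0 (by rw [hg0']; exact hcop2.dvd_of_dvd_mul_left hdvd)
end

section
/- Let n ≥ 1, let B be a positive integer, and let p be a prime with p > 2B and p > n. Then the number of polynomials f ∈ ℤ[x] of degree n with all coefficients in the interval [−B, B) such that f(x+i) is p-Eisenstein for some integer i is at most (2B)². (Indeed, it is at most (2B−1)·2B.) -/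
open Polynomial

lemma shift_struct (p n : ℕ) (f : Polynomial ℤ) (i : ℤ)
    (hdeg : (f.comp (X + C i)).natDegree = n)
    (hdvd : ∀ k < n, (p : ℤ) ∣ (f.comp (X + C i)).coeff k) :
    f.map (Int.castRingHom (ZMod p)) =
      C ((((f.comp (X + C i)).coeff n : ℤ) : ZMod p)) * (X + C (-(i : ZMod p))) ^ n := by
  set g := f.comp (X + C i) with hg
  have hgmap : g.map (Int.castRingHom (ZMod p)) = C ((g.coeff n : ZMod p)) * X ^ n := by
    ext k
    simp only [coeff_map, coeff_C_mul, coeff_X_pow, Int.coe_castRingHom]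
    rcases lt_trichotomy k n with h | h | h
    · rw [if_neg h.ne, mul_zero]
      exact (ZMod.intCast_zmod_eq_zero_iff_dvd _ _).mpr (hdvd k h)
    · subst h; simp
    · rw [if_neg h.ne', mul_zero, coeff_eq_zero_of_natDegree_lt (hdeg ▸ h), Int.cast_zero]
  have hfg : g.comp (X - C i) = f := by
    rw [hg, comp_assoc]
    simp
  calc f.map (Int.castRingHom (ZMod p))
      = (g.comp (X - C i)).map (Int.castRingHom (ZMod p)) := by rw [hfg]
    _ = (g.map (Int.castRingHom (ZMod p))).comp
          ((X - C i).map (Int.castRingHom (ZMod p))) := by rw [Polynomial.map_comp]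
    _ = (C ((g.coeff n : ZMod p)) * X ^ n).comp (X - C ((i : ZMod p))) := by
        rw [hgmap]; simp
    _ = C ((g.coeff n : ZMod p)) * (X + C (-(i : ZMod p))) ^ n := by
        simp [mul_comp, pow_comp, sub_eq_add_neg]

/-- Let `n ≥ 1`, `B > 0` and let `p` be a prime with `p > 2B` and `p > n`.
The number of degree-`n` polynomials over `ℤ` with all coefficients in
`[-B, B)` that become `p`-Eisenstein after some integer shift is at most
`(2B - 1)·2B`, and in particular at most `(2B)²`. -/
theorem count_shifted_eisenstein_large_prime (n B p : ℕ) (hn : 1 ≤ n) (hB : 0 < B)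
    (hp : p.Prime) (hpB : 2 * B < p) (hpn : n < p) :
    {f : Polynomial ℤ | f.natDegree = n ∧
        (∀ j, -(B : ℤ) ≤ f.coeff j ∧ f.coeff j < B) ∧
        ∃ i : ℤ, IsEisensteinZ p n (f.comp (X + C i))}.ncard ≤ (2 * B - 1) * (2 * B) ∧
      {f : Polynomial ℤ | f.natDegree = n ∧
        (∀ j, -(B : ℤ) ≤ f.coeff j ∧ f.coeff j < B) ∧
        ∃ i : ℤ, IsEisensteinZ p n (f.comp (X + C i))}.ncard ≤ (2 * B) ^ 2 := by
  haveI : Fact p.Prime := ⟨hp⟩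
  suffices h : {f : Polynomial ℤ | f.natDegree = n ∧
        (∀ j, -(B : ℤ) ≤ f.coeff j ∧ f.coeff j < B) ∧
        ∃ i : ℤ, IsEisensteinZ p n (f.comp (X + C i))}.ncard ≤ (2 * B - 1) * (2 * B) by
    refine ⟨h, h.trans ?_⟩
    have h1 : 2 * B - 1 ≤ 2 * B := Nat.sub_le _ _
    calc (2 * B - 1) * (2 * B) ≤ (2 * B) * (2 * B) := Nat.mul_le_mul_right _ h1
      _ = (2 * B) ^ 2 := (sq _).symm
  -- the target finset
  set T : Finset (ℤ × ℤ) :=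
    ((Finset.Ico (-(B : ℤ)) (B : ℤ)).erase 0) ×ˢ (Finset.Ico (-(B : ℤ)) (B : ℤ)) with hT
  have hn_ne : (n : ZMod p) ≠ 0 := by
    rw [Ne, ZMod.natCast_eq_zero_iff]
    intro hd
    have := Nat.le_of_dvd (by omega) hd
    omega
  -- key structure facts for members of the set
  have struct : ∀ f : Polynomial ℤ, f ∈ {f : Polynomial ℤ | f.natDegree = n ∧
        (∀ j, -(B : ℤ) ≤ f.coeff j ∧ f.coeff j < B) ∧
        ∃ i : ℤ, IsEisensteinZ p n (f.comp (X + C i))} →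
      ∃ c : ZMod p,
        f.map (Int.castRingHom (ZMod p)) =
          C (((f.coeff n : ℤ) : ZMod p)) * (X + C (-c)) ^ n ∧
        ((f.coeff n : ℤ) : ZMod p) ≠ 0 ∧
        ((f.coeff (n - 1) : ℤ) : ZMod p) =
          ((f.coeff n : ℤ) : ZMod p) * (-c) * (n : ZMod p) := by
    rintro f ⟨hdeg, hbd, i, hEdeg, hEn, hEdvd, hE0⟩
    have hmap := shift_struct p n f i hEdeg hEdvd
    have hcoeffn : ((f.coeff n : ℤ) : ZMod p) =
        (((f.comp (X + C i)).coeff n : ℤ) : ZMod p) := by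
      have := congrArg (fun q => q.coeff n) hmap
      simp only [coeff_map, coeff_C_mul, coeff_X_add_C_pow, Int.coe_castRingHom,
        Nat.sub_self, pow_zero, Nat.choose_self, Nat.cast_one, one_mul, mul_one] at this
      exact this
    refine ⟨(i : ZMod p), ?_, ?_, ?_⟩
    · rw [hmap, hcoeffn]
    · rw [hcoeffn, Ne, ZMod.intCast_zmod_eq_zero_iff_dvd]
      exact hEn
    · have := congrArg (fun q => q.coeff (n - 1)) hmap
      simp only [coeff_map, coeff_C_mul, coeff_X_add_C_pow, Int.coe_castRingHom] at this
      rw [hcoeffn]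
      have h1 : n - (n - 1) = 1 := by omega
      have h2 : n.choose (n - 1) = n := by
        rw [Nat.choose_symm hn, Nat.choose_one_right]
      rw [h1, h2, pow_one] at this
      rw [this]
      ring
  -- the injection
  have hsub : ∀ f ∈ {f : Polynomial ℤ | f.natDegree = n ∧
        (∀ j, -(B : ℤ) ≤ f.coeff j ∧ f.coeff j < B) ∧
        ∃ i : ℤ, IsEisensteinZ p n (f.comp (X + C i))},
      (f.coeff n, f.coeff (n - 1)) ∈ (T : Set (ℤ × ℤ)) := by
    intro f hf
    obtain ⟨c, hmap, hne, hlin⟩ := struct f hf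
    obtain ⟨hdeg, hbd, -⟩ := hf
    have hfn : f.coeff n ≠ 0 := by
      intro h; apply hne; rw [h]; simp
    simp only [T, Finset.coe_product, Set.mem_prod, Finset.coe_erase, Set.mem_diff,
      Finset.mem_coe, Finset.mem_Ico, Set.mem_singleton_iff]
    exact ⟨⟨⟨(hbd n).1, (hbd n).2⟩, hfn⟩, (hbd (n - 1)).1, (hbd (n - 1)).2⟩
  have hinj : Set.InjOn (fun f : Polynomial ℤ => (f.coeff n, f.coeff (n - 1)))
      {f : Polynomial ℤ | f.natDegree = n ∧
        (∀ j, -(B : ℤ) ≤ f.coeff j ∧ f.coeff j < B) ∧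
        ∃ i : ℤ, IsEisensteinZ p n (f.comp (X + C i))} := by
    intro f hf f' hf' hpair
    obtain ⟨c, hmap, hne, hlin⟩ := struct f hf
    obtain ⟨c', hmap', hne', hlin'⟩ := struct f' hf'
    have e1 : f.coeff n = f'.coeff n := congrArg Prod.fst hpair
    have e2 : f.coeff (n - 1) = f'.coeff (n - 1) := congrArg Prod.snd hpair
    have hc : c = c' := by
      rw [e1, e2] at hlin
      rw [hlin] at hlin'
      have h3 := mul_right_cancel₀ hn_ne hlin'
      have h4 := mul_left_cancel₀ hne' h3
      exact neg_injective h4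
    have hmm : f.map (Int.castRingHom (ZMod p)) = f'.map (Int.castRingHom (ZMod p)) := by
      rw [hmap, hmap', e1, hc]
    ext j
    have hbd := hf.2.1 j
    have hbd' := hf'.2.1 j
    have hcast : ((f.coeff j : ℤ) : ZMod p) = ((f'.coeff j : ℤ) : ZMod p) := by
      have := congrArg (fun q => q.coeff j) hmm
      simpa [coeff_map] using this
    have hdvd : (p : ℤ) ∣ f.coeff j - f'.coeff j := by
      rwa [← ZMod.intCast_zmod_eq_zero_iff_dvd, Int.cast_sub, sub_eq_zero]
    have := Int.eq_zero_of_abs_lt_dvd hdvd (by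
      rw [abs_lt]
      constructor <;> [nlinarith [hbd.1, hbd'.2]; nlinarith [hbd.2, hbd'.1]])
    omega
  have hcard : T.card = (2 * B - 1) * (2 * B) := by
    have h0 : (0 : ℤ) ∈ Finset.Ico (-(B : ℤ)) (B : ℤ) := by
      simp only [Finset.mem_Ico]
      constructor <;> [omega; exact_mod_cast hB]
    have hB2 : ((B : ℤ) - -(B : ℤ)).toNat = 2 * B := by omega
    rw [hT, Finset.card_product, Finset.card_erase_of_mem h0, Int.card_Ico, hB2]
  calc {f : Polynomial ℤ | f.natDegree = n ∧
        (∀ j, -(B : ℤ) ≤ f.coeff j ∧ f.coeff j < B) ∧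
        ∃ i : ℤ, IsEisensteinZ p n (f.comp (X + C i))}.ncard
      ≤ (T : Set (ℤ × ℤ)).ncard :=
        Set.ncard_le_ncard_of_injOn _ hsub hinj (T.finite_toSet)
    _ = T.card := Set.ncard_coe_finset T
    _ = (2 * B - 1) * (2 * B) := hcard
end

section
/- Let n ≥ 1, let B be a positive integer, and let p be a prime with p ≤ 2B. Then the number of polynomials f ∈ ℤ[x] of degree n with all coefficients in the interval [−B, B) such that f(x+i) is p-Eisenstein for some integer i is at most 4^{n+1} · B^{n+1} / p^{n−1}. -/
open Polynomial

lemma filter_card_le (B p : ℕ) (hp : 0 < p) (r : ZMod p) :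
    ((Finset.Ico (-(B:ℤ)) (B:ℤ)).filter (fun x : ℤ => ((x : ZMod p) = r))).card ≤ 2 * B / p + 1 := by
  have hp' : (0:ℤ) < p := by exact_mod_cast hp
  have key : ((Finset.Ico (-(B:ℤ)) (B:ℤ)).filter (fun x : ℤ => ((x : ZMod p) = r))).card
      ≤ (Finset.range (2 * B / p + 1)).card := by
    apply Finset.card_le_card_of_injOn (fun x => ((x + B) / (p:ℤ)).toNat)
    · intro x hx
      simp only [Finset.mem_coe, Finset.mem_filter, Finset.mem_Ico] at hx
      have h0 : 0 ≤ x + B := by linarith [hx.1.1]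
      have hq : (x + B) / (p:ℤ) ≤ (2 * B : ℤ) / p := by
        apply Int.ediv_le_ediv hp'; linarith [hx.1.2]
      have h2 : ((x + B) / (p:ℤ)).toNat ≤ ((2 * B : ℤ) / p).toNat :=
        Int.toNat_le_toNat hq
      have he : ((2 * B : ℤ) / p).toNat = 2 * B / p := by
        have : ((2 * B : ℤ)) / (p:ℤ) = ((2 * B / p : ℕ) : ℤ) := by
          rw [Int.natCast_div]; push_cast; ring
        rw [this, Int.toNat_natCast]
      rw [Finset.mem_coe, Finset.mem_range]
      beta_reduce
      omega
    · intro x hx y hy hxy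
      simp only [Finset.mem_coe, Finset.mem_filter, Finset.mem_Ico] at hx hy
      have h0x : 0 ≤ (x + B) / (p:ℤ) := Int.ediv_nonneg (by linarith [hx.1.1]) hp'.le
      have h0y : 0 ≤ (y + B) / (p:ℤ) := Int.ediv_nonneg (by linarith [hy.1.1]) hp'.le
      have hq : (x + B) / (p:ℤ) = (y + B) / (p:ℤ) := by
        have h := congrArg (fun t : ℕ => (t : ℤ)) hxy
        simpa [Int.toNat_of_nonneg h0x, Int.toNat_of_nonneg h0y] using h
      have hm : (x + B) % (p:ℤ) = (y + B) % (p:ℤ) := by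
        have hc : ((x : ZMod p) : ZMod p) = (y : ZMod p) := hx.2.trans hy.2.symm
        have hmod : x % (p:ℤ) = y % (p:ℤ) := by
          rwa [ZMod.intCast_eq_intCast_iff'] at hc
        exact (Int.ModEq.add_right (B:ℤ) hmod)
      have e1 := Int.mul_ediv_add_emod (x + B) (p:ℤ)
      have e2 := Int.mul_ediv_add_emod (y + B) (p:ℤ)
      have : x + (B:ℤ) = y + B := by rw [← e1, ← e2, hq, hm]
      linarith
  simpa using key

lemma coeff_cong (p n : ℕ) [Fact p.Prime] (f : Polynomial ℤ) (i : ℤ)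
    (hf : IsEisensteinZ p n (f.comp (X + C i))) (hdeg : f.natDegree = n) :
    ∀ j, j ≤ n → (f.coeff j : ZMod p) =
      (f.coeff n : ZMod p) * ((-(i : ZMod p)) ^ (n - j) * (n.choose j : ZMod p)) := by
  set φ := Int.castRingHom (ZMod p)
  set F : Polynomial (ZMod p) := f.map φ with hF
  set ii : ZMod p := (i : ZMod p)
  have hGmap : F.comp (X + C ii) = (f.comp (X + C i)).map φ := by
    rw [Polynomial.map_comp]; simp [φ, ii, hF]
  set G : Polynomial (ZMod p) := F.comp (X + C ii) with hG
  have hdegF : F.natDegree ≤ n := hdeg ▸ natDegree_map_le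
  have hdegG : G.natDegree ≤ n := by
    calc G.natDegree ≤ F.natDegree * (X + C ii).natDegree := natDegree_comp_le
    _ ≤ n * 1 := by
        apply Nat.mul_le_mul hdegF
        exact le_of_eq (natDegree_X_add_C ii)
    _ = n := by ring
  have hGlow : ∀ j < n, G.coeff j = 0 := by
    intro j hj
    rw [hGmap, Polynomial.coeff_map]
    have := hf.2.2.1 j hj
    simpa [φ, ZMod.intCast_zmod_eq_zero_iff_dvd] using this
  have hGeq : G = C (G.coeff n) * X ^ n := by
    ext k
    rcases lt_trichotomy k n with h | h | h
    · rw [hGlow k h, coeff_C_mul, coeff_X_pow, if_neg h.ne]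
      ring
    · subst h; rw [coeff_C_mul, coeff_X_pow, if_pos rfl]; ring
    · rw [coeff_eq_zero_of_natDegree_lt (lt_of_le_of_lt hdegG h),
        coeff_C_mul, coeff_X_pow, if_neg h.ne']
      ring
  have hFeq : F = C (G.coeff n) * (X + C (-ii)) ^ n := by
    have : G.comp (X - C ii) = F := by
      rw [hG, comp_assoc]
      simp [sub_add_cancel]
    rw [← this, hGeq]
    simp only [mul_comp, C_comp, pow_comp, X_comp]
    rw [sub_eq_add_neg]
    simp
  have hco : ∀ j, F.coeff j = (G.coeff n) * ((-ii) ^ (n - j) * (n.choose j : ZMod p)) := by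
    intro j
    rw [hFeq, coeff_C_mul, coeff_X_add_C_pow]
  have hcn : F.coeff n = G.coeff n := by
    rw [hco n]; simp
  intro j hj
  have h1 : F.coeff j = (f.coeff j : ZMod p) := by simp [hF, φ]
  have h2 : F.coeff n = (f.coeff n : ZMod p) := by simp [hF, φ]
  rw [← h1, ← h2, hco j, hcn]

/-- Let `n ≥ 1`, `B > 0` and let `p` be a prime with `p ≤ 2B`.  The number of
degree-`n` polynomials over `ℤ` with all coefficients in `[-B, B)` that become
`p`-Eisenstein after some integer shift is at most `4^{n+1}·B^{n+1}/p^{n-1}`. -/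
theorem count_shifted_eisenstein_small_prime (n B p : ℕ) (hn : 1 ≤ n) (hB : 0 < B)
    (hp : p.Prime) (hpB : p ≤ 2 * B) :
    ({f : Polynomial ℤ | f.natDegree = n ∧
        (∀ j, -(B : ℤ) ≤ f.coeff j ∧ f.coeff j < B) ∧
        ∃ i : ℤ, IsEisensteinZ p n (f.comp (X + C i))}.ncard : ℝ) ≤
      4 ^ (n + 1) * (B : ℝ) ^ (n + 1) / (p : ℝ) ^ (n - 1) := by
  classical
  haveI : Fact p.Prime := ⟨hp⟩
  set S : Set (Polynomial ℤ) := {f : Polynomial ℤ | f.natDegree = n ∧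
        (∀ j, -(B : ℤ) ≤ f.coeff j ∧ f.coeff j < B) ∧
        ∃ i : ℤ, IsEisensteinZ p n (f.comp (X + C i))} with hS
  set Box : Finset ℤ := Finset.Ico (-(B:ℤ)) (B:ℤ) with hBox
  set T : Finset ((_ : ZMod p) × (_ : ℤ) × (Fin n → ℤ)) :=
    Finset.univ.sigma (fun r => Box.sigma (fun a =>
      Fintype.piFinset (fun j : Fin n =>
        Box.filter (fun x : ℤ =>
          ((x : ZMod p) = (a : ZMod p) * ((-r) ^ (n - (j:ℕ)) * (n.choose j : ZMod p))))))) with hT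
  set Φ : Polynomial ℤ → ((_ : ZMod p) × (_ : ℤ) × (Fin n → ℤ)) := fun f =>
    ⟨if h : ∃ i : ℤ, IsEisensteinZ p n (f.comp (X + C i)) then ((h.choose : ℤ) : ZMod p) else 0,
      f.coeff n, fun j => f.coeff j⟩ with hΦ
  have hmaps : Set.MapsTo Φ S ↑T := by
    intro f hf
    obtain ⟨hdeg, hbox, hex⟩ := hf
    simp only [hΦ, dif_pos hex, Finset.mem_coe, hT, Finset.mem_sigma, Finset.mem_univ,
      true_and, Fintype.mem_piFinset, Finset.mem_filter]
    constructor
    · simp [hBox, Finset.mem_Ico, hbox n]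
    · intro j
      refine ⟨by simp [hBox, Finset.mem_Ico, hbox j], ?_⟩
      exact coeff_cong p n f hex.choose hex.choose_spec hdeg j (le_of_lt j.2)
  have hinj : Set.InjOn Φ S := by
    intro f hf g hg hfg
    have e1 : (Φ f).2.1 = (Φ g).2.1 := by rw [hfg]
    have e2 : (Φ f).2.2 = (Φ g).2.2 := by rw [hfg]
    simp only [hΦ] at e1 e2
    have hn' : f.coeff n = g.coeff n := e1
    have hlow : (fun j : Fin n => f.coeff j) = (fun j : Fin n => g.coeff j) := e2
    ext k
    rcases lt_trichotomy k n with h | h | h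
    · exact congrFun hlow ⟨k, h⟩
    · subst h; exact hn'
    · rw [coeff_eq_zero_of_natDegree_lt (hf.1 ▸ h),
        coeff_eq_zero_of_natDegree_lt (hg.1 ▸ h)]
  have hfin : S.Finite :=
    Set.Finite.of_finite_image ((T.finite_toSet).subset (Set.mapsTo_iff_image_subset.mp hmaps)) hinj
  have hcard : S.ncard ≤ T.card := by
    calc S.ncard = (Φ '' S).ncard := (Set.ncard_image_of_injOn hinj).symm
    _ ≤ (↑T : Set _).ncard :=
        Set.ncard_le_ncard (Set.mapsTo_iff_image_subset.mp hmaps) T.finite_toSet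
    _ = T.card := by rw [Set.ncard_coe_finset]
  -- T.card bound
  have hBoxcard : Box.card = 2 * B := by
    simp [hBox, Int.card_Ico]
    omega
  have hTcard : T.card ≤ p * (2 * B * (2 * B / p + 1) ^ n) := by
    rw [hT, Finset.card_sigma]
    have hb : ∀ r : ZMod p, (Box.sigma (fun a =>
        Fintype.piFinset (fun j : Fin n =>
          Box.filter (fun x : ℤ =>
            ((x : ZMod p) = (a : ZMod p) * ((-r) ^ (n - (j:ℕ)) * (n.choose j : ZMod p))))))).card
        ≤ 2 * B * (2 * B / p + 1) ^ n := by
      intro r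
      rw [Finset.card_sigma]
      calc ∑ a ∈ Box, (Fintype.piFinset (fun j : Fin n =>
            Box.filter (fun x : ℤ =>
              ((x : ZMod p) = (a : ZMod p) * ((-r) ^ (n - (j:ℕ)) * (n.choose j : ZMod p)))))).card
          ≤ ∑ _a ∈ Box, (2 * B / p + 1) ^ n := by
            apply Finset.sum_le_sum
            intro a _
            rw [Fintype.card_piFinset]
            calc ∏ j : Fin n, (Box.filter (fun x : ℤ =>
                ((x : ZMod p) = (a : ZMod p) * ((-r) ^ (n - (j:ℕ)) * (n.choose j : ZMod p))))).card
                ≤ (2 * B / p + 1) ^ (Finset.univ : Finset (Fin n)).card := by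
                  apply Finset.prod_le_pow_card
                  intro j _
                  exact filter_card_le B p hp.pos _
              _ = (2 * B / p + 1) ^ n := by simp
        _ = 2 * B * (2 * B / p + 1) ^ n := by
            rw [Finset.sum_const, hBoxcard]; ring
    calc ∑ r : ZMod p, _ ≤ ∑ _r : ZMod p, (2 * B * (2 * B / p + 1) ^ n) :=
          Finset.sum_le_sum (fun r _ => hb r)
      _ = p * (2 * B * (2 * B / p + 1) ^ n) := by
          rw [Finset.sum_const, Finset.card_univ, ZMod.card, smul_eq_mul]
  -- pass to ℝ
  have hppos : (0:ℝ) < p := by exact_mod_cast hp.pos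
  have hBpos : (0:ℝ) < B := by exact_mod_cast hB
  have hm : ((2 * B / p + 1 : ℕ) : ℝ) ≤ 4 * B / p := by
    push_cast
    have h1 : ((2 * B / p : ℕ) : ℝ) ≤ (2 * B : ℝ) / p := by
      have := Nat.cast_div_le (α := ℝ) (m := 2 * B) (n := p)
      push_cast at this
      exact this
    have h2 : (1:ℝ) ≤ (2 * B : ℝ) / p := by
      rw [le_div_iff₀ hppos, one_mul]
      exact_mod_cast hpB
    calc ((2 * B / p : ℕ) : ℝ) + 1 ≤ (2 * B : ℝ) / p + (2 * B : ℝ) / p := by linarith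
      _ = 4 * B / p := by ring
  obtain ⟨k, rfl⟩ : ∃ k, n = k + 1 := ⟨n - 1, by omega⟩
  have step1 : (S.ncard : ℝ) ≤ (p : ℝ) * (2 * B * ((2 * B / p + 1 : ℕ) : ℝ) ^ (k + 1)) := by
    calc (S.ncard : ℝ) ≤ ((p * (2 * B * (2 * B / p + 1) ^ (k + 1)) : ℕ) : ℝ) := by
          exact_mod_cast le_trans hcard hTcard
      _ = (p : ℝ) * (2 * B * ((2 * B / p + 1 : ℕ) : ℝ) ^ (k + 1)) := by
          push_cast
          try ring
  calc (S.ncard : ℝ) ≤ (p : ℝ) * (2 * B * ((2 * B / p + 1 : ℕ) : ℝ) ^ (k + 1)) := step1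
    _ ≤ (p : ℝ) * (2 * B * (4 * B / p) ^ (k + 1)) := by
        gcongr <;> first | positivity | norm_num
    _ ≤ 4 ^ (k + 1 + 1) * (B : ℝ) ^ (k + 1 + 1) / (p : ℝ) ^ (k + 1 - 1) := by
        simp only [Nat.add_sub_cancel]
        have hpk : ((p:ℝ)) ^ k ≠ 0 := pow_ne_zero k hppos.ne'
        have heq : (p : ℝ) * (2 * B * (4 * B / p) ^ (k + 1))
            = 2 * ((4 * (B:ℝ)) ^ (k + 1) * B) / (p:ℝ) ^ k := by
          rw [div_pow]
          field_simp
          ring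
        rw [heq]
        calc 2 * ((4 * (B:ℝ)) ^ (k + 1) * B) / (p:ℝ) ^ k
            ≤ 4 * ((4 * (B:ℝ)) ^ (k + 1) * B) / (p:ℝ) ^ k := by
              gcongr <;> first | positivity | norm_num
          _ = 4 ^ (k + 1 + 1) * (B : ℝ) ^ (k + 1 + 1) / (p : ℝ) ^ k := by
              rw [mul_pow]
              ring
end

section
/- Let p be a prime and let S = { [[a,b],[c,d]] ∈ ℤ_p^{2×2} : p ∣ b, p ∤ a, p ∤ d }, a subgroup of GL₂(ℤ_p). Then S has exactly p+1 left cosets in GL₂(ℤ_p), namely the cosets [[1,i],[0,1]]·S for i ∈ {0, 1, …, p−1} and the coset [[0,1],[1,0]]·S; these p+1 cosets are pairwise distinct and every element of GL₂(ℤ_p) belongs to one of them. -/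
open Matrix

/-- The set `S = {[[a,b],[c,d]] ∈ ℤ_[p]^{2×2} : p ∣ b, p ∤ a, p ∤ d}`. -/
def Sset (p : ℕ) [Fact p.Prime] : Set (Matrix (Fin 2) (Fin 2) ℤ_[p]) :=
  {A | (p : ℤ_[p]) ∣ A 0 1 ∧ ¬ (p : ℤ_[p]) ∣ A 0 0 ∧ ¬ (p : ℤ_[p]) ∣ A 1 1}

/-- The left coset `T·S` of `S` in `ℤ_[p]^{2×2}`. -/
def leftCoset' (p : ℕ) [Fact p.Prime] (T : Matrix (Fin 2) (Fin 2) ℤ_[p]) :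
    Set (Matrix (Fin 2) (Fin 2) ℤ_[p]) :=
  (T * ·) '' Sset p

/-- The shift matrix `[[1, i], [0, 1]]`. -/
noncomputable def shiftM (p : ℕ) [Fact p.Prime] (i : ℕ) : Matrix (Fin 2) (Fin 2) ℤ_[p] :=
  !![1, (i : ℤ_[p]); 0, 1]

/-- The reciprocal matrix `[[0, 1], [1, 0]]`. -/
noncomputable def swapM (p : ℕ) [Fact p.Prime] : Matrix (Fin 2) (Fin 2) ℤ_[p] :=
  !![0, 1; 1, 0]

section helpers
variable {p : ℕ} [Fact p.Prime]

local notation "φ" => (PadicInt.toZMod : ℤ_[p] →+* ZMod p)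

lemma dvd_iff_toZMod {x : ℤ_[p]} : (p : ℤ_[p]) ∣ x ↔ φ x = 0 := by
  rw [← RingHom.mem_ker, PadicInt.ker_toZMod, PadicInt.maximalIdeal_eq_span_p,
    Ideal.mem_span_singleton]

lemma isUnit_of_not_dvd {x : ℤ_[p]} (h : ¬ (p : ℤ_[p]) ∣ x) : IsUnit x := by
  rw [PadicInt.isUnit_iff]
  exact le_antisymm (PadicInt.norm_le_one x)
    (not_lt.1 fun hl => h ((PadicInt.norm_lt_one_iff_dvd x).1 hl))
end helpers

section main
variable {p : ℕ} [Fact p.Prime]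

local notation "φ" => (PadicInt.toZMod : ℤ_[p] →+* ZMod p)

lemma mem_sset_iff {A : Matrix (Fin 2) (Fin 2) ℤ_[p]} :
    A ∈ Sset p ↔ φ (A 0 1) = 0 ∧ φ (A 0 0) ≠ 0 ∧ φ (A 1 1) ≠ 0 := by
  simp [Sset, dvd_iff_toZMod]

lemma mem_sset_mk {a b c d : ℤ_[p]} :
    !![a, b; c, d] ∈ Sset p ↔ φ b = 0 ∧ φ a ≠ 0 ∧ φ d ≠ 0 := by
  rw [mem_sset_iff]
  norm_num

lemma sset_det_isUnit {A : Matrix (Fin 2) (Fin 2) ℤ_[p]} (hA : A ∈ Sset p) :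
    IsUnit A.det := by
  rw [mem_sset_iff] at hA
  apply isUnit_of_not_dvd
  rw [dvd_iff_toZMod, Matrix.det_fin_two]
  push_cast [map_sub, _root_.map_mul]
  simp [hA.1, mul_ne_zero hA.2.1 hA.2.2]

lemma one_mem_sset : (1 : Matrix (Fin 2) (Fin 2) ℤ_[p]) ∈ Sset p := by
  rw [mem_sset_iff]
  simp

lemma mul_mem_sset {A B : Matrix (Fin 2) (Fin 2) ℤ_[p]} (hA : A ∈ Sset p)
    (hB : B ∈ Sset p) : A * B ∈ Sset p := by
  rw [mem_sset_iff] at hA hB ⊢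
  simp only [Matrix.mul_apply, Fin.sum_univ_two, map_add, _root_.map_mul]
  refine ⟨by rw [hA.1, hB.1]; ring, ?_, ?_⟩
  · rw [hA.1]; simpa using mul_ne_zero hA.2.1 hB.2.1
  · rw [hB.1]; simpa using mul_ne_zero hA.2.2 hB.2.2

lemma det_toZMod_ne {A : Matrix (Fin 2) (Fin 2) ℤ_[p]} (hA : IsUnit A.det) :
    φ (A 0 0) * φ (A 1 1) - φ (A 0 1) * φ (A 1 0) ≠ 0 := by
  have h := (hA.map φ)
  rw [Matrix.det_fin_two, map_sub, _root_.map_mul, _root_.map_mul] at h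
  exact h.ne_zero

lemma inv_mem_sset {A : Matrix (Fin 2) (Fin 2) ℤ_[p]} (hA : A ∈ Sset p) :
    ∃ B ∈ Sset p, A * B = 1 ∧ B * A = 1 := by
  have hd := sset_det_isUnit hA
  refine ⟨A⁻¹, ?_, A.mul_nonsing_inv hd, A.nonsing_inv_mul hd⟩
  have hinv : φ (Ring.inverse A.det) ≠ 0 := by
    intro h0
    have := Ring.inverse_mul_cancel A.det hd
    have h1 := congrArg φ this
    rw [_root_.map_mul, _root_.map_one, h0, zero_mul] at h1
    exact one_ne_zero h1.symm
  rw [mem_sset_iff] at hA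
  have hAi : A⁻¹ = !![Ring.inverse A.det * A 1 1, Ring.inverse A.det * (-A 0 1);
      Ring.inverse A.det * (-A 1 0), Ring.inverse A.det * A 0 0] := by
    rw [Matrix.inv_def, Matrix.adjugate_fin_two]
    ext x y
    fin_cases x <;> fin_cases y <;> simp [Matrix.smul_apply]
  rw [hAi, mem_sset_mk]
  simp only [_root_.map_mul, map_neg]
  exact ⟨by rw [hA.1]; ring, mul_ne_zero hinv hA.2.2, mul_ne_zero hinv hA.2.1⟩

lemma mem_coset_iff {T A : Matrix (Fin 2) (Fin 2) ℤ_[p]} :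
    A ∈ leftCoset' p T ↔ ∃ B ∈ Sset p, T * B = A := by
  simp [leftCoset', Set.mem_image, eq_comm]

lemma shift_mem_shift {i j : ℕ} (h : shiftM p i ∈ leftCoset' p (shiftM p j)) :
    (i : ZMod p) = j := by
  rw [mem_coset_iff] at h
  obtain ⟨B, hB, hBe⟩ := h
  rw [mem_sset_iff] at hB
  have h11 := congrFun (congrFun hBe 1) 1
  have h01 := congrFun (congrFun hBe 0) 1
  simp [shiftM, Matrix.mul_apply, Fin.sum_univ_two] at h11 h01
  -- h11 : B 1 1 = 1 ; h01 : B 0 1 + i * B 1 1 = j (roughly)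
  have := congrArg φ h01
  rw [map_add, _root_.map_mul, map_natCast, map_natCast, hB.1] at this
  have h11' := congrArg φ h11
  rw [_root_.map_one] at h11'
  rw [h11'] at this
  rw [eq_comm]
  simpa using this

lemma nat_cast_inj_of_lt {i j : ℕ} (hi : i < p) (hj : j < p)
    (h : (i : ZMod p) = j) : i = j := by
  have := congrArg ZMod.val h
  rwa [ZMod.val_cast_of_lt hi, ZMod.val_cast_of_lt hj] at this

lemma covering {A : Matrix (Fin 2) (Fin 2) ℤ_[p]} (hA : IsUnit A.det) :
    (∃ i < p, A ∈ leftCoset' p (shiftM p i)) ∨ A ∈ leftCoset' p (swapM p) := by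
  have hdet := det_toZMod_ne hA
  have hp : 0 < p := (Fact.out : p.Prime).pos
  by_cases hd : φ (A 1 1) = 0
  · right
    rw [mem_coset_iff]
    refine ⟨!![A 1 0, A 1 1; A 0 0, A 0 1], ?_, ?_⟩
    · rw [mem_sset_mk]
      rw [hd] at hdet
      refine ⟨hd, ?_, ?_⟩
      · intro h0; apply hdet; rw [h0]; ring
      · intro h0; apply hdet; rw [h0]; ring
    · ext x y
      fin_cases x <;> fin_cases y <;>
        simp [swapM, Matrix.mul_apply, Fin.sum_univ_two]
  · left
    set z : ZMod p := φ (A 0 1) * (φ (A 1 1))⁻¹ with hz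
    refine ⟨z.val, ZMod.val_lt z, ?_⟩
    rw [mem_coset_iff]
    have hcast : ((z.val : ℕ) : ZMod p) = z := by simp [ZMod.natCast_val, ZMod.cast_id]
    refine ⟨!![A 0 0 - (z.val : ℤ_[p]) * A 1 0, A 0 1 - (z.val : ℤ_[p]) * A 1 1;
      A 1 0, A 1 1], ?_, ?_⟩
    · rw [mem_sset_mk]
      simp only [map_sub, _root_.map_mul, map_natCast, hcast]
      refine ⟨?_, ?_, hd⟩
      · rw [hz, mul_assoc, inv_mul_cancel₀ hd, mul_one, sub_self]
      · intro h0
        apply hdet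
        rw [sub_eq_zero] at h0
        rw [h0, hz]
        field_simp
        ring
    · ext x y
      fin_cases x <;> fin_cases y <;>
        simp [shiftM, Matrix.mul_apply, Fin.sum_univ_two]

lemma shift_ne_swap {i : ℕ} : leftCoset' p (shiftM p i) ≠ leftCoset' p (swapM p) := by
  intro h
  have hmem : shiftM p i ∈ leftCoset' p (swapM p) := by
    rw [← h, mem_coset_iff]
    exact ⟨1, one_mem_sset, mul_one _⟩
  rw [mem_coset_iff] at hmem
  obtain ⟨B, hB, hBe⟩ := hmem
  rw [mem_sset_iff] at hB
  have h10 := congrFun (congrFun hBe 1) 0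
  simp [swapM, shiftM, Matrix.mul_apply, Fin.sum_univ_two] at h10
  -- h10 : B 0 0 = 0
  exact hB.2.1 (by rw [h10]; exact map_zero _)

end main

/-- `S = {[[a,b],[c,d]] : p ∣ b, p ∤ a, p ∤ d}` is a subgroup of `GL₂(ℤ_[p])`
and it has exactly `p + 1` left cosets, namely `[[1,i],[0,1]]·S` for
`i ∈ {0, …, p-1}` together with `[[0,1],[1,0]]·S`: these cosets are pairwise
distinct and every element of `GL₂(ℤ_[p])` belongs to one of them. -/
theorem sset_cosets (p : ℕ) [Fact p.Prime] :
    -- `S` consists of invertible matrices: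
    (∀ A ∈ Sset p, IsUnit A.det) ∧
    -- `S` is a subgroup: it contains the identity, is closed under
    -- multiplication, and each element has a (two-sided) inverse in `S`:
    (1 : Matrix (Fin 2) (Fin 2) ℤ_[p]) ∈ Sset p ∧
    (∀ A ∈ Sset p, ∀ B ∈ Sset p, A * B ∈ Sset p) ∧
    (∀ A ∈ Sset p, ∃ B ∈ Sset p, A * B = 1 ∧ B * A = 1) ∧
    -- the `p + 1` cosets are pairwise distinct:
    (∀ i < p, ∀ j < p, i ≠ j → leftCoset' p (shiftM p i) ≠ leftCoset' p (shiftM p j)) ∧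
    (∀ i < p, leftCoset' p (shiftM p i) ≠ leftCoset' p (swapM p)) ∧
    -- every element of `GL₂(ℤ_[p])` lies in one of them:
    (∀ A : Matrix (Fin 2) (Fin 2) ℤ_[p], IsUnit A.det →
      (∃ i < p, A ∈ leftCoset' p (shiftM p i)) ∨ A ∈ leftCoset' p (swapM p)) ∧
    -- in particular there are exactly `p + 1` such cosets:
    {X : Set (Matrix (Fin 2) (Fin 2) ℤ_[p]) |
      (∃ i < p, X = leftCoset' p (shiftM p i)) ∨ X = leftCoset' p (swapM p)}.ncard
      = p + 1 := by
  have hshift_ne : ∀ i < p, ∀ j < p, i ≠ j →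
      leftCoset' p (shiftM p i) ≠ leftCoset' p (shiftM p j) := by
    intro i hi j hj hij h
    apply hij
    apply nat_cast_inj_of_lt hi hj
    apply shift_mem_shift
    rw [← h, mem_coset_iff]
    exact ⟨1, one_mem_sset, mul_one _⟩
  refine ⟨fun A hA => sset_det_isUnit hA, one_mem_sset,
    fun A hA B hB => mul_mem_sset hA hB, fun A hA => inv_mem_sset hA,
    hshift_ne, fun i _ => shift_ne_swap, fun A hA => covering hA, ?_⟩
  have hset : {X : Set (Matrix (Fin 2) (Fin 2) ℤ_[p]) |
      (∃ i < p, X = leftCoset' p (shiftM p i)) ∨ X = leftCoset' p (swapM p)} =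
      insert (leftCoset' p (swapM p))
        ((fun i => leftCoset' p (shiftM p i)) '' Set.Iio p) := by
    ext X
    simp only [Set.mem_setOf_eq, Set.mem_insert_iff, Set.mem_image, Set.mem_Iio]
    constructor
    · rintro (⟨i, hi, rfl⟩ | rfl)
      · exact Or.inr ⟨i, hi, rfl⟩
      · exact Or.inl rfl
    · rintro (rfl | ⟨i, hi, rfl⟩)
      · exact Or.inr rfl
      · exact Or.inl ⟨i, hi, rfl⟩
  rw [hset]
  have hIio : (Set.Iio p : Set ℕ) = ↑(Finset.range p) := by
    simp [Finset.coe_range]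
  have hfin : ((fun i => leftCoset' p (shiftM p i)) '' Set.Iio p).Finite := by
    rw [hIio]
    exact (Finset.range p).finite_toSet.image _
  have hinj : Set.InjOn (fun i => leftCoset' p (shiftM p i)) (Set.Iio p) := by
    intro i hi j hj hij
    by_contra hne
    exact hshift_ne i hi j hj hne hij
  rw [Set.ncard_insert_of_notMem ?_ hfin]
  · rw [Set.ncard_image_of_injOn hinj, hIio, Set.ncard_coe_finset, Finset.card_range]
  · rintro ⟨i, hi, hieq⟩
    exact shift_ne_swap hieq
end

section
/- The polynomial f(x) = x² + 8x − 16 is irreducible over ℤ, but for every prime p and every integer i, the polynomial f(x+i) is not p-Eisenstein. In particular, f is irreducible but not shifted Eisenstein. -/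
open Polynomial

lemma aux_natDegree : (X ^ 2 + C 8 * X - C 16 : Polynomial ℤ).natDegree = 2 := by
  compute_degree!

lemma aux_monic : (X ^ 2 + C 8 * X - C 16 : Polynomial ℤ).Monic := by
  rw [Monic, leadingCoeff, aux_natDegree]
  simp [coeff_add, coeff_sub, coeff_C, coeff_X_pow, coeff_C_mul, coeff_X]

lemma aux_comp (i : ℤ) :
    (X ^ 2 + C 8 * X - C 16 : Polynomial ℤ).comp (X + C i) =
      X ^ 2 + C (2 * i + 8) * X + C (i ^ 2 + 8 * i - 16) := by
  simp only [add_comp, sub_comp, mul_comp, pow_comp, X_comp, C_comp]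
  simp only [C_add, C_sub, C_mul, C_pow, map_ofNat]
  ring

lemma aux_coeff1 (b c : ℤ) : ((X : Polynomial ℤ) ^ 2 + C b * X + C c).coeff 1 = b := by
  rw [coeff_add, coeff_add, coeff_X_pow, coeff_C_mul, coeff_X_one, coeff_C]
  norm_num

lemma aux_coeff0 (b c : ℤ) : ((X : Polynomial ℤ) ^ 2 + C b * X + C c).coeff 0 = c := by
  rw [coeff_add, coeff_add, coeff_X_pow, coeff_C_mul, coeff_X_zero, coeff_C]
  norm_num

/-- The polynomial `f(x) = x² + 8x - 16` is irreducible over `ℤ`, yet for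
every prime `p` and every integer shift `i`, the polynomial `f(x + i)` is not
`p`-Eisenstein: `f` is irreducible but not shifted Eisenstein. -/
theorem irreducible_not_shifted_eisenstein :
    Irreducible (X ^ 2 + C 8 * X - C 16 : Polynomial ℤ) ∧
      ∀ p : ℕ, p.Prime → ∀ i : ℤ,
        ¬ IsEisensteinZ p 2 ((X ^ 2 + C 8 * X - C 16 : Polynomial ℤ).comp (X + C i)) := by
  constructor
  · rw [aux_monic.irreducible_iff_roots_eq_zero_of_degree_le_three
      (by rw [aux_natDegree]) (by rw [aux_natDegree]; norm_num)]
    rw [Multiset.eq_zero_iff_forall_notMem]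
    intro r hr
    rw [mem_roots aux_monic.ne_zero, IsRoot] at hr
    simp only [eval_add, eval_sub, eval_mul, eval_pow, eval_X, eval_C] at hr
    have h : (r + 4) ^ 2 = 32 := by ring_nf; linarith
    have h1 : r ≤ 2 := by nlinarith
    have h2 : -10 ≤ r := by nlinarith
    interval_cases r <;> norm_num at h
  · rintro p hp i ⟨hdeg, hlead, hdvd, hsq⟩
    rw [aux_comp] at hdvd hsq
    have h1 : (p : ℤ) ∣ 2 * i + 8 := by
      have := hdvd 1 (by norm_num)
      rwa [aux_coeff1] at this
    have h0 : (p : ℤ) ∣ i ^ 2 + 8 * i - 16 := by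
      have := hdvd 0 (by norm_num)
      rwa [aux_coeff0] at this
    have hsq' : ¬ (p : ℤ) ^ 2 ∣ i ^ 2 + 8 * i - 16 := by
      intro h
      apply hsq
      rwa [aux_coeff0]
    have hqp : Prime (p : ℤ) := by
      rw [Int.prime_iff_natAbs_prime]
      simpa using hp
    rcases eq_or_ne p 2 with rfl | hne
    · -- p = 2 : show 2 ∣ i, then 4 ∣ constant coefficient
      have hi : Even i := by
        rcases Int.even_or_odd i with he | ho
        · exact he
        · exfalso
          obtain ⟨k, rfl⟩ := ho
          obtain ⟨c, hc⟩ := h0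
          push_cast at hc
          ring_nf at hc
          generalize k ^ 2 = m at hc
          omega
      obtain ⟨k, rfl⟩ := hi
      apply hsq'
      push_cast
      exact ⟨k ^ 2 + 4 * k - 4, by ring⟩
    · -- p odd : p ∣ i + 4, hence p ∣ 32, contradiction
      have hp2 : ¬ (p : ℤ) ∣ 2 := by
        intro h
        rw [show ((2:ℤ)) = ((2:ℕ) : ℤ) by norm_num, Int.natCast_dvd_natCast] at h
        exact hne ((Nat.prime_dvd_prime_iff_eq hp Nat.prime_two).mp h)
      have h14 : (p : ℤ) ∣ i + 4 := by
        rcases (hqp.dvd_mul.mp (show (p:ℤ) ∣ 2 * (i + 4) by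
          convert h1 using 1; ring)) with h | h
        · exact absurd h hp2
        · exact h
      have hsqd : (p : ℤ) ∣ (i + 4) ^ 2 := by
        rw [sq]; exact h14.mul_left _
      have h32 : (p : ℤ) ∣ 32 := by
        have := dvd_sub hsqd h0
        rw [show (32:ℤ) = (i + 4) ^ 2 - (i ^ 2 + 8 * i - 16) by ring]
        exact this
      exact hp2 (hqp.dvd_of_dvd_pow ((by norm_num : (32:ℤ) = 2 ^ 5) ▸ h32))
end
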